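/- Let ν be a Borel probability measure on ℝ, v > 0, and define H(z) = z + v G_ν(z) for z ∈ ℂ⁺, where G_ν is the Stieltjes transform. The free additive convolution ρ = μ_v ⊞ ν of the semicircular law μ_v (variance v) with ν satisfies: the subordination function ω(z) = z − v G_ρ(z) is a conformal bijection from ℂ⁺ onto Ω := H⁻¹(ℂ⁺), its inverse being the restriction of H to Ω, and G_ρ(z) = G_ν(ω(z)) for all z ∈ ℂ⁺. -/

import Mathlib

/-!
The Pastur equation says exactly that `H (ω z) = z`, and `Im ω z ≥ Im z` because a Cauchy
transform maps `ℂ⁺` into the closed lower half-plane; so `ω` maps `ℂ⁺` into `Ω` with left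
inverse `H`, and everything reduces to the injectivity of `H` on `Ω`. With
`N(w) = ∫ |w - t|⁻² dν` one has `Im H(w) = Im w · (1 - v N(w))`, so `v N < 1` on `Ω`. By the
resolvent identity, `H z = H w` with `z ≠ w` forces `v ∫ (z - t)⁻¹ (w - t)⁻¹ dν = 1`, which
contradicts `|∫ (z - t)⁻¹ (w - t)⁻¹ dν| ≤ (N(z) + N(w)) / 2`.
-/

open MeasureTheory Set

noncomputable def cauchyTransform (μ : Measure ℝ) (z : ℂ) : ℂ :=
  ∫ t : ℝ, (z - t)⁻¹ ∂μ

section CauchyTransform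

variable {μ : Measure ℝ} {z w : ℂ}

lemma resolvent_ofReal_eq_neg_inv_sub (z : ℂ) (t : ℝ) : resolvent z t = -(z - t)⁻¹ := by
  rw [resolvent, Ring.inverse_eq_inv', ← inv_neg, neg_sub]
  rfl

lemma cauchyTransform_eq_neg_resolventTransform (μ : Measure ℝ) :
    cauchyTransform μ = -resolventTransform μ := by
  ext z
  simp [cauchyTransform, resolventTransform_apply, resolvent_ofReal_eq_neg_inv_sub, integral_neg]

lemma upperHalfPlane_subset_compl_image_algebraMap (s : Set ℝ) :
    {z : ℂ | 0 < z.im} ⊆ (algebraMap ℝ ℂ '' s)ᶜ := by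
  rintro z hz ⟨t, -, rfl⟩
  simp at hz

lemma differentiableOn_cauchyTransform [IsFiniteMeasure μ] :
    DifferentiableOn ℂ (cauchyTransform μ) {z | 0 < z.im} := by
  rw [cauchyTransform_eq_neg_resolventTransform]
  exact analyticOn_resolventTransform.neg.differentiableOn.mono
    (upperHalfPlane_subset_compl_image_algebraMap _)

lemma integrable_inv_sub_ofReal [IsFiniteMeasure μ] (hz : 0 < z.im) :
    Integrable (fun t : ℝ => (z - t)⁻¹) μ := by
  have h : (fun t : ℝ => (z - t)⁻¹) = -resolvent z := by
    ext t
    simp [resolvent_ofReal_eq_neg_inv_sub]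
  exact h ▸ (integrable_resolvent (upperHalfPlane_subset_compl_image_algebraMap _ hz)).neg

lemma sub_ofReal_ne_zero (hz : 0 < z.im) (t : ℝ) : z - t ≠ 0 := by
  rintro h
  simpa [sub_eq_zero.1 h] using hz.ne'

lemma im_inv_sub_ofReal (z : ℂ) (t : ℝ) : ((z - t)⁻¹).im = -z.im * ‖(z - t)⁻¹‖ ^ 2 := by
  rw [Complex.inv_im, norm_inv, inv_pow, ← Complex.normSq_eq_norm_sq]
  simp [div_eq_mul_inv]

lemma integrable_norm_inv_sub_ofReal_sq [IsFiniteMeasure μ] (hz : 0 < z.im) :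
    Integrable (fun t : ℝ => ‖(z - t)⁻¹‖ ^ 2) μ := by
  refine ((integrable_inv_sub_ofReal hz).im.div_const (-z.im)).congr (.of_forall fun t => ?_)
  simp only [RCLike.im_to_complex, im_inv_sub_ofReal]
  field_simp [hz.ne']

lemma im_cauchyTransform [IsFiniteMeasure μ] (hz : 0 < z.im) :
    (cauchyTransform μ z).im = -z.im * ∫ t : ℝ, ‖(z - t)⁻¹‖ ^ 2 ∂μ := by
  rw [cauchyTransform, ← RCLike.im_to_complex, ← integral_im (integrable_inv_sub_ofReal hz),
    ← integral_const_mul]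
  simp only [RCLike.im_to_complex, im_inv_sub_ofReal]

lemma im_le_im_sub_mul_cauchyTransform [IsFiniteMeasure μ] {v : ℝ} (hv : 0 ≤ v)
    (hz : 0 < z.im) : z.im ≤ (z - v * cauchyTransform μ z).im := by
  have hN : 0 ≤ ∫ t : ℝ, ‖(z - t)⁻¹‖ ^ 2 ∂μ := integral_nonneg fun t => by positivity
  rw [Complex.sub_im, Complex.im_ofReal_mul, im_cauchyTransform hz]
  nlinarith [mul_nonneg hv (mul_nonneg hz.le hN)]

lemma cauchyTransform_sub_cauchyTransform [IsFiniteMeasure μ] (hz : 0 < z.im) (hw : 0 < w.im) :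
    cauchyTransform μ z - cauchyTransform μ w = (w - z) * ∫ t : ℝ, (z - t)⁻¹ * (w - t)⁻¹ ∂μ := by
  rw [cauchyTransform, cauchyTransform, ← integral_sub (integrable_inv_sub_ofReal hz)
    (integrable_inv_sub_ofReal hw), ← integral_const_mul]
  refine integral_congr_ae (.of_forall fun t => ?_)
  field_simp [sub_ofReal_ne_zero hz t, sub_ofReal_ne_zero hw t]
  ring

lemma norm_integral_inv_sub_ofReal_mul_inv_sub_ofReal_le [IsFiniteMeasure μ] (hz : 0 < z.im)
    (hw : 0 < w.im) :
    ‖∫ t : ℝ, (z - t)⁻¹ * (w - t)⁻¹ ∂μ‖ ≤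
      ((∫ t : ℝ, ‖(z - t)⁻¹‖ ^ 2 ∂μ) + ∫ t : ℝ, ‖(w - t)⁻¹‖ ^ 2 ∂μ) / 2 := by
  rw [← integral_add (integrable_norm_inv_sub_ofReal_sq hz)
    (integrable_norm_inv_sub_ofReal_sq hw), ← integral_div]
  refine (norm_integral_le_integral_norm _).trans (integral_mono_of_nonneg
    (.of_forall fun t => norm_nonneg _) (((integrable_norm_inv_sub_ofReal_sq hz).add
    (integrable_norm_inv_sub_ofReal_sq hw)).div_const 2) (.of_forall fun t => ?_))
  simp only [norm_mul]
  nlinarith [two_mul_le_add_sq ‖(z - t)⁻¹‖ ‖(w - t)⁻¹‖]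

lemma mul_integral_norm_inv_sub_ofReal_sq_lt_one [IsFiniteMeasure μ] {v : ℝ} (hz : 0 < z.im)
    (hHz : 0 < (z + v * cauchyTransform μ z).im) :
    v * ∫ t : ℝ, ‖(z - t)⁻¹‖ ^ 2 ∂μ < 1 := by
  have hHz' : (z + v * cauchyTransform μ z).im =
      z.im * (1 - v * ∫ t : ℝ, ‖(z - t)⁻¹‖ ^ 2 ∂μ) := by
    rw [Complex.add_im, Complex.im_ofReal_mul, im_cauchyTransform hz]
    ring
  rw [hHz'] at hHz
  linarith [(pos_iff_pos_of_mul_pos hHz).1 hz]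

theorem injOn_add_mul_cauchyTransform [IsFiniteMeasure μ] {v : ℝ} (hv : 0 ≤ v) :
    InjOn (fun w => w + v * cauchyTransform μ w)
      {w | 0 < w.im ∧ 0 < (w + v * cauchyTransform μ w).im} := by
  rintro z ⟨hz, hHz⟩ w ⟨hw, hHw⟩ hzw
  by_contra hne
  have hdiff := cauchyTransform_sub_cauchyTransform (μ := μ) hz hw
  set I := ∫ t : ℝ, (z - t)⁻¹ * (w - t)⁻¹ ∂μ
  have hvI : (v : ℂ) * I = 1 := by
    have : (z - w) * (v * I - 1) = 0 := by linear_combination -hzw + v * hdiff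
    simpa [sub_eq_zero, hne] using this
  have hnorm : v * ‖I‖ = 1 := by
    simpa [abs_of_nonneg hv] using congrArg norm hvI
  have := norm_integral_inv_sub_ofReal_mul_inv_sub_ofReal_le (μ := μ) hz hw
  nlinarith [mul_integral_norm_inv_sub_ofReal_sq_lt_one hz hHz,
    mul_integral_norm_inv_sub_ofReal_sq_lt_one hw hHw]

end CauchyTransform

/-- Biane's subordination for free convolution with a semicircular law: if `ρ = μ_v ⊞ ν` is
the unique probability measure satisfying the Pastur equation `G_ρ(z) = G_ν(z − v G_ρ(z))`
on `ℂ⁺`, then `ω(z) = z − v G_ρ(z)` is an analytic bijection from `ℂ⁺` onto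
`Ω = H⁻¹(ℂ⁺)` where `H(w) = w + v G_ν(w)`, its inverse is the restriction of `H` to `Ω`,
and `G_ρ(z) = G_ν(ω(z))` on `ℂ⁺`. -/
theorem subordination_semicircular (ν ρ : Measure ℝ) [IsProbabilityMeasure ν]
    [IsProbabilityMeasure ρ] (v : ℝ) (hv : 0 < v)
    (Gν Gρ : ℂ → ℂ)
    (hGν : Gν = fun z => ∫ t : ℝ, (z - (t : ℂ))⁻¹ ∂ν)
    (hGρ : Gρ = fun z => ∫ t : ℝ, (z - (t : ℂ))⁻¹ ∂ρ)
    (hPastur : ∀ z : ℂ, 0 < z.im → Gρ z = Gν (z - v * Gρ z))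
    (H : ℂ → ℂ) (hH : H = fun w => w + v * Gν w)
    (ω : ℂ → ℂ) (hω : ω = fun z => z - v * Gρ z)
    (Upper Ω' : Set ℂ) (hU : Upper = {z : ℂ | 0 < z.im})
    (hΩ' : Ω' = {w ∈ Upper | 0 < (H w).im}) :
    Set.BijOn ω Upper Ω' ∧ DifferentiableOn ℂ ω Upper ∧
    (∀ z ∈ Upper, H (ω z) = z) ∧ (∀ w ∈ Ω', ω (H w) = w) ∧
    ∀ z ∈ Upper, Gρ z = Gν (ω z) := by
  obtain rfl : Gν = cauchyTransform ν := hGν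
  obtain rfl : Gρ = cauchyTransform ρ := hGρ
  subst hH hω hU hΩ'
  have hleft : LeftInvOn (fun w => w + v * cauchyTransform ν w)
      (fun z => z - v * cauchyTransform ρ z) {z | 0 < z.im} := fun z hz => by
    simp only [← hPastur z hz, sub_add_cancel]
  have hmaps : MapsTo (fun z => z - v * cauchyTransform ρ z) {z | 0 < z.im}
      {w | 0 < w.im ∧ 0 < (w + v * cauchyTransform ν w).im} := fun z hz =>
    ⟨hz.trans_le (im_le_im_sub_mul_cauchyTransform hv.le hz),
      by simpa only [hleft hz] using hz.out⟩
  have hright := (injOn_add_mul_cauchyTransform hv.le).rightInvOn_of_leftInvOn hleft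
    (fun w hw => hw.2) hmaps
  exact ⟨InvOn.bijOn ⟨hleft, hright⟩ hmaps fun w hw => hw.2,
    differentiableOn_id.sub (differentiableOn_cauchyTransform.const_mul _), hleft, hright,
    hPastur⟩
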